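/- Say that condition C(ℓ) holds if G²_{ℓ−1}(a) > G²_ℓ(ℓw) − (ℓw − a)·(1 + ℓw/σ) for every a ∈ [(ℓ−1)w, 4(ℓ−1)] (for ℓ = 1 this reads 0 > G²_1(w) − w·(1 + w/σ)). If w ≤ 2σ, then C(ℓ) fails for every integer ℓ with 1 ≤ ℓ < ℓ*. If w > 2σ, then there exists an integer k* with 1 ≤ k* < ℓ*·(1 − σ/8) such that C(ℓ) holds for every integer ℓ with 1 ≤ ℓ ≤ k*, and C(ℓ) fails for every integer ℓ with k* < ℓ < ℓ*. -/
import Mathlib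


/-- Surface tension of the type-2 stack of `ℓ` layers and area `a`:
`τ²_ℓ(a) = 8ℓ − 2√((4ℓ−a)(4−w)ℓ)`. -/
noncomputable def tau2 (w : ℝ) (ℓ : ℕ) (a : ℝ) : ℝ :=
  8 * (ℓ : ℝ) - 2 * Real.sqrt ((4 * (ℓ : ℝ) - a) * ((4 - w) * (ℓ : ℝ)))

/-- `G²_ℓ(a) = τ²_ℓ(a) + a²/(2σ)` (the finite branch).  Note that `G²_0(0) = 0`. -/
noncomputable def G2 (w σ : ℝ) (ℓ : ℕ) (a : ℝ) : ℝ :=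
  tau2 w ℓ a + a ^ 2 / (2 * σ)

/-- Condition `C(ℓ)`: `G²_{ℓ−1}(a) > G²_ℓ(ℓw) − (ℓw − a)(1 + ℓw/σ)` for every
`a ∈ [(ℓ−1)w, 4(ℓ−1)]` (for `ℓ = 1` this reads `0 > G²_1(w) − w(1 + w/σ)`). -/
def Cond (w σ : ℝ) (ℓ : ℕ) : Prop :=
  ∀ a ∈ Set.Icc (((ℓ : ℝ) - 1) * w) (4 * ((ℓ : ℝ) - 1)),
    G2 w σ ℓ ((ℓ : ℝ) * w) - ((ℓ : ℝ) * w - a) * (1 + (ℓ : ℝ) * w / σ)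
      < G2 w σ (ℓ - 1) a

noncomputable def hfun (w σ δ u : ℝ) : ℝ :=
  u + δ + (u - δ) ^ 2 / (2 * σ) - 2 * Real.sqrt ((δ + w) * u)

lemma key_eq (w σ : ℝ) (hσ : σ ≠ 0) (hw4 : w ≤ 4) (ℓ : ℕ) (hℓ : 1 ≤ ℓ) (a : ℝ) :
    G2 w σ (ℓ - 1) a
      - (G2 w σ ℓ ((ℓ : ℝ) * w) - ((ℓ : ℝ) * w - a) * (1 + (ℓ : ℝ) * w / σ))
      = hfun w σ ((4 - w) * (ℓ : ℝ) - 4) (4 * ((ℓ : ℝ) - 1) - a) := by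
  have hm : ((ℓ - 1 : ℕ) : ℝ) = (ℓ : ℝ) - 1 := by
    rw [Nat.cast_sub hℓ, Nat.cast_one]
  have h1 : Real.sqrt ((4 * (ℓ : ℝ) - (ℓ : ℝ) * w) * ((4 - w) * (ℓ : ℝ)))
      = (4 - w) * (ℓ : ℝ) := by
    rw [show (4 * (ℓ : ℝ) - (ℓ : ℝ) * w) * ((4 - w) * (ℓ : ℝ))
        = ((4 - w) * (ℓ : ℝ)) ^ 2 by ring]
    exact Real.sqrt_sq (mul_nonneg (by linarith) (Nat.cast_nonneg ℓ))
  have h2 : (4 * ((ℓ : ℝ) - 1) - a) * ((4 - w) * ((ℓ : ℝ) - 1))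
      = ((4 - w) * (ℓ : ℝ) - 4 + w) * (4 * ((ℓ : ℝ) - 1) - a) := by ring
  unfold G2 tau2 hfun
  rw [hm, h2, h1]
  field_simp
  ring

lemma cond_iff (w σ : ℝ) (hσ : σ ≠ 0) (hw4 : w ≤ 4) (ℓ : ℕ) (hℓ : 1 ≤ ℓ) :
    Cond w σ ℓ ↔ ∀ u ∈ Set.Icc (0 : ℝ) ((4 - w) * ((ℓ : ℝ) - 1)),
      0 < hfun w σ ((4 - w) * (ℓ : ℝ) - 4) u := by
  constructor
  · intro h u hu
    have ha : (4 * ((ℓ : ℝ) - 1) - u) ∈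
        Set.Icc (((ℓ : ℝ) - 1) * w) (4 * ((ℓ : ℝ) - 1)) := by
      constructor
      · nlinarith [hu.2]
      · linarith [hu.1]
    have h3 := h _ ha
    have he := key_eq w σ hσ hw4 ℓ hℓ (4 * ((ℓ : ℝ) - 1) - u)
    rw [show 4 * ((ℓ : ℝ) - 1) - (4 * ((ℓ : ℝ) - 1) - u) = u by ring] at he
    linarith
  · intro h a ha
    have hu : (4 * ((ℓ : ℝ) - 1) - a) ∈
        Set.Icc (0 : ℝ) ((4 - w) * ((ℓ : ℝ) - 1)) := by
      constructor
      · linarith [ha.2]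
      · nlinarith [ha.1]
    have h3 := h _ hu
    have he := key_eq w σ hσ hw4 ℓ hℓ a
    linarith

lemma hfun_mono (w σ : ℝ) (δ₁ δ₂ u : ℝ) (hu : 0 ≤ u) (hc : 0 ≤ δ₁ + w)
    (hΔ : δ₁ ≤ δ₂) :
    hfun w σ δ₂ (u + (δ₂ - δ₁)) ≤ hfun w σ δ₁ u := by
  have hcu : (0 : ℝ) ≤ (δ₁ + w) * u := mul_nonneg hc hu
  have hs : Real.sqrt ((δ₁ + w) * u) + (δ₂ - δ₁)
      ≤ Real.sqrt ((δ₂ + w) * (u + (δ₂ - δ₁))) := by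
    have hamgm : 2 * Real.sqrt ((δ₁ + w) * u) ≤ (δ₁ + w) + u := by
      rw [Real.sqrt_mul hc u]
      nlinarith [sq_nonneg (Real.sqrt (δ₁ + w) - Real.sqrt u),
        Real.sq_sqrt hc, Real.sq_sqrt hu]
    have h1 : (Real.sqrt ((δ₁ + w) * u) + (δ₂ - δ₁)) ^ 2
        ≤ (δ₂ + w) * (u + (δ₂ - δ₁)) := by
      nlinarith [Real.sq_sqrt hcu]
    calc Real.sqrt ((δ₁ + w) * u) + (δ₂ - δ₁)
        = Real.sqrt ((Real.sqrt ((δ₁ + w) * u) + (δ₂ - δ₁)) ^ 2) :=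
          (Real.sqrt_sq (by linarith [Real.sqrt_nonneg ((δ₁ + w) * u)])).symm
      _ ≤ _ := Real.sqrt_le_sqrt h1
  unfold hfun
  rw [show u + (δ₂ - δ₁) - δ₂ = u - δ₁ by ring]
  linarith

lemma not_cond_of (w σ : ℝ) (hσ : σ ≠ 0) (hw4 : w ≤ 4) (ℓ : ℕ) (hℓ : 1 ≤ ℓ)
    (u : ℝ) (hu : u ∈ Set.Icc (0 : ℝ) ((4 - w) * ((ℓ : ℝ) - 1)))
    (hle : hfun w σ ((4 - w) * (ℓ : ℝ) - 4) u ≤ 0) : ¬ Cond w σ ℓ := by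
  rw [cond_iff w σ hσ hw4 ℓ hℓ]
  push_neg
  exact ⟨u, hu, hle⟩

lemma not_cond_mono (w σ : ℝ) (hσ : σ ≠ 0) (hw4 : w ≤ 4) (ℓ₁ ℓ₂ : ℕ)
    (h1 : 1 ≤ ℓ₁) (h12 : ℓ₁ ≤ ℓ₂) (hnc : ¬ Cond w σ ℓ₁) : ¬ Cond w σ ℓ₂ := by
  rw [cond_iff w σ hσ hw4 ℓ₁ h1] at hnc
  push_neg at hnc
  obtain ⟨u, hu, hle⟩ := hnc
  have hcast : (ℓ₁ : ℝ) ≤ (ℓ₂ : ℝ) := Nat.cast_le.mpr h12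
  have h1ℝ : (1 : ℝ) ≤ (ℓ₁ : ℝ) := by exact_mod_cast h1
  have hc1 : 0 ≤ ((4 - w) * (ℓ₁ : ℝ) - 4) + w := by nlinarith
  have hΔ : (4 - w) * (ℓ₁ : ℝ) - 4 ≤ (4 - w) * (ℓ₂ : ℝ) - 4 := by nlinarith
  apply not_cond_of w σ hσ hw4 ℓ₂ (le_trans h1 h12)
    (u + (((4 - w) * (ℓ₂ : ℝ) - 4) - ((4 - w) * (ℓ₁ : ℝ) - 4)))
  · constructor
    · have := hu.1; linarith
    · have := hu.2; nlinarith
  · have hmono := hfun_mono w σ ((4 - w) * (ℓ₁ : ℝ) - 4) ((4 - w) * (ℓ₂ : ℝ) - 4)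
      u hu.1 hc1 hΔ
    linarith

lemma fail_endpoint (w σ : ℝ) (hσ : 0 < σ) (hw0 : 0 < w) (hw4 : w ≤ 4)
    (hw2σ : w ≤ 2 * σ) (ℓ : ℕ) (hℓ : 1 ≤ ℓ) : ¬ Cond w σ ℓ := by
  have h1ℝ : (1 : ℝ) ≤ (ℓ : ℝ) := by exact_mod_cast hℓ
  have hcnn : 0 ≤ (4 - w) * ((ℓ : ℝ) - 1) := mul_nonneg (by linarith) (by linarith)
  apply not_cond_of w σ (ne_of_gt hσ) hw4 ℓ hℓ ((4 - w) * ((ℓ : ℝ) - 1))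
    ⟨le_refl 0 |>.trans hcnn, le_refl _⟩
  unfold hfun
  rw [show ((4 - w) * (ℓ : ℝ) - 4 + w) * ((4 - w) * ((ℓ : ℝ) - 1))
      = ((4 - w) * ((ℓ : ℝ) - 1)) ^ 2 by ring,
    Real.sqrt_sq hcnn,
    show (4 - w) * ((ℓ : ℝ) - 1) - ((4 - w) * (ℓ : ℝ) - 4) = w by ring]
  have hb : w ^ 2 / (2 * σ) ≤ w := by
    rw [div_le_iff₀ (by linarith)]
    nlinarith
  linarith

lemma cond_one (w σ : ℝ) (hσ : 0 < σ) (hw4 : w ≤ 4) (hw2σ : 2 * σ < w) :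
    Cond w σ 1 := by
  rw [cond_iff w σ (ne_of_gt hσ) hw4 1 le_rfl]
  intro u hu
  have hu0 : u = 0 := le_antisymm (by
    have := hu.2
    push_cast at this ⊢
    linarith) hu.1
  subst hu0
  have e : (4 - w) * ((1 : ℕ) : ℝ) - 4 = -w := by push_cast; ring
  rw [e]
  unfold hfun
  rw [show (-w + w) * (0 : ℝ) = 0 by ring, Real.sqrt_zero,
    show ((0 : ℝ) - -w) ^ 2 = w ^ 2 by ring]
  have h5 : w < w ^ 2 / (2 * σ) := by
    rw [lt_div_iff₀ (by linarith)]
    nlinarith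
  linarith

lemma fail_half (w σ : ℝ) (hσ : 0 < σ) (hw4 : w ≤ 4) (hw2σ : 2 * σ < w)
    (ℓ : ℕ) (hℓ : 1 ≤ ℓ) (hδ : -σ / 2 ≤ (4 - w) * (ℓ : ℝ) - 4) :
    ¬ Cond w σ ℓ := by
  set δ : ℝ := (4 - w) * (ℓ : ℝ) - 4 with hδdef
  have h1ℝ : (1 : ℝ) ≤ (ℓ : ℝ) := by exact_mod_cast hℓ
  apply not_cond_of w σ (ne_of_gt hσ) hw4 ℓ hℓ (δ + σ / 2)
  · constructor
    · linarith
    · rw [show (4 - w) * ((ℓ : ℝ) - 1) = δ + w by rw [hδdef]; ring]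
      linarith
  · unfold hfun
    rw [show δ + σ / 2 - δ = σ / 2 by ring,
      show (σ / 2) ^ 2 / (2 * σ) = σ / 8 by field_simp; ring]
    have hkey : 2 * δ + σ / 2 + σ / 8 ≤ 2 * Real.sqrt ((δ + w) * (δ + σ / 2)) := by
      rcases le_or_gt (δ + 5 * σ / 16) 0 with hcase | hcase
      · have := Real.sqrt_nonneg ((δ + w) * (δ + σ / 2))
        linarith
      · have h2 : (δ + 5 * σ / 16) ^ 2 ≤ (δ + w) * (δ + σ / 2) := by
          nlinarith [mul_nonneg hσ.le hcase.le,
            mul_nonneg hcase.le (by linarith : (0:ℝ) ≤ w - 2 * σ),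
            mul_pos hσ hσ, mul_lt_mul_of_pos_left hw2σ hσ]
        have h3 : δ + 5 * σ / 16 ≤ Real.sqrt ((δ + w) * (δ + σ / 2)) :=
          (Real.le_sqrt' hcase).mpr h2
        linarith
    linarith

/-- if `w ≤ 2σ`, condition `C(ℓ)` fails for every `1 ≤ ℓ < ℓ*`; if
`w > 2σ`, there is `k*` with `1 ≤ k* < ℓ*(1 − σ/8)` such that `C(ℓ)` holds for
`1 ≤ ℓ ≤ k*` and fails for `k* < ℓ < ℓ*`. -/
theorem sticking_out_threshold (w σ : ℝ) (hw0 : 0 < w) (hw4 : w < 4) (hσ : 0 < σ)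
    (hnd : ∀ n : ℕ, (n : ℝ) ≠ 4 / (4 - w)) :
    (w ≤ 2 * σ → ∀ ℓ : ℕ, 1 ≤ ℓ → (ℓ : ℝ) < 4 / (4 - w) → ¬ Cond w σ ℓ) ∧
    (2 * σ < w → ∃ k : ℕ, 1 ≤ k ∧ (k : ℝ) < 4 / (4 - w) * (1 - σ / 8) ∧
      (∀ ℓ : ℕ, 1 ≤ ℓ → ℓ ≤ k → Cond w σ ℓ) ∧
      (∀ ℓ : ℕ, k < ℓ → (ℓ : ℝ) < 4 / (4 - w) → ¬ Cond w σ ℓ)) := by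
  constructor
  · intro hw2σ ℓ hℓ _
    exact fail_endpoint w σ hσ hw0 hw4.le hw2σ ℓ hℓ
  · intro hw2σ
    have hσ2 : σ < 2 := by linarith
    set x : ℝ := 4 / (4 - w) * (1 - σ / 8) with hxdef
    have h4w : (0 : ℝ) < 4 - w := by linarith
    have hx0 : 0 < x := by
      apply mul_pos (div_pos (by norm_num) h4w)
      linarith
    set ℓ₀ : ℕ := ⌈x⌉₊ with hℓ₀def
    have hℓ₀1 : 1 ≤ ℓ₀ := Nat.one_le_ceil_iff.mpr hx0
    have hxle : x ≤ (ℓ₀ : ℝ) := Nat.le_ceil x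
    have hxval : (4 - w) * x = 4 - σ / 2 := by
      rw [hxdef]
      field_simp
      ring
    have hδ₀ : -σ / 2 ≤ (4 - w) * (ℓ₀ : ℝ) - 4 := by
      have : (4 - w) * x ≤ (4 - w) * (ℓ₀ : ℝ) := by
        exact mul_le_mul_of_nonneg_left hxle h4w.le
      linarith [hxval ▸ this]
    have hfail₀ : ¬ Cond w σ ℓ₀ := fail_half w σ hσ hw4.le hw2σ ℓ₀ hℓ₀1 hδ₀
    have hne : {n : ℕ | 1 ≤ n ∧ ¬ Cond w σ n}.Nonempty := ⟨ℓ₀, hℓ₀1, hfail₀⟩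
    set n₀ : ℕ := sInf {n : ℕ | 1 ≤ n ∧ ¬ Cond w σ n} with hn₀def
    have hn₀mem : n₀ ∈ {n : ℕ | 1 ≤ n ∧ ¬ Cond w σ n} := Nat.sInf_mem hne
    have hn₀le : n₀ ≤ ℓ₀ := Nat.sInf_le ⟨hℓ₀1, hfail₀⟩
    have hn₀2 : 2 ≤ n₀ := by
      rcases Nat.lt_or_ge n₀ 2 with h | h
      · have h1n : 1 ≤ n₀ := hn₀mem.1
        have hn1 : n₀ = 1 := by omega
        exact absurd (cond_one w σ hσ hw4.le hw2σ) (hn1 ▸ hn₀mem.2)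
      · exact h
    refine ⟨n₀ - 1, by omega, ?_, ?_, ?_⟩
    · have hceil : (ℓ₀ : ℝ) < x + 1 := Nat.ceil_lt_add_one hx0.le
      have hcast : ((n₀ - 1 : ℕ) : ℝ) = (n₀ : ℝ) - 1 := by
        rw [Nat.cast_sub (by omega), Nat.cast_one]
      have : (n₀ : ℝ) ≤ (ℓ₀ : ℝ) := Nat.cast_le.mpr hn₀le
      rw [hcast]
      linarith
    · intro ℓ h1 h2
      by_contra hc
      have : n₀ ≤ ℓ := Nat.sInf_le ⟨h1, hc⟩
      omega
    · intro ℓ hℓ _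
      exact not_cond_mono w σ (ne_of_gt hσ) hw4.le n₀ ℓ hn₀mem.1 (by omega) hn₀mem.2
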